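/- arXiv:1807.05247 — 2 statements merged into one kernel-verified Lean document; each statement's English description precedes it below -/
import Mathlib

section
/- With the tuning parameter chosen to match the path-loss exponent, i.e. σ = ρ, the scaled raw-second-moment features of two transmitters at the same incident angle recover their exact distance difference: for all d_A > 0 and d_C > 0, ‖H̃(d_A) − H̃(d_C)‖_F = |d_A − d_C|. -/
/-- With the tuning parameter chosen to match the path-loss exponent,
i.e. σ = ρ, the scaled raw-second-moment features of two transmitters at the same
incident angle recover their exact distance difference:
for all d_A > 0, d_C > 0, ‖H̃(d_A) − H̃(d_C)‖_F = |d_A − d_C|. -/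
theorem stmt_0
    (B : ℕ) (hB : 1 ≤ B)
    (lam Δr ρ : ℝ) (hlam : 0 < lam) (hΔr : 0 < Δr) (hρ : 0 < ρ)
    (φ : ℝ)
    -- vanilla LoS channel vector: h(d)_b = d^{-ρ} exp(-i (2π/λ) Δr (b-1) cos φ)
    (h : ℝ → Fin B → ℂ)
    (hh : ∀ d : ℝ, 0 < d → ∀ b : Fin B,
      h d b = ((d ^ (-ρ) : ℝ) : ℂ) *
        Complex.exp (-Complex.I *
          (((2 * Real.pi / lam) * Δr * ((b : ℕ) : ℝ) * Real.cos φ : ℝ) : ℂ)))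
    -- raw second moment: H̄(d) = h(d) h(d)^H
    (Hbar : ℝ → Matrix (Fin B) (Fin B) ℂ)
    (hHbar : ∀ d : ℝ, ∀ b b' : Fin B, Hbar d b b' = h d b * star (h d b'))
    -- Frobenius norm
    (frob : Matrix (Fin B) (Fin B) ℂ → ℝ)
    (hfrob : ∀ A : Matrix (Fin B) (Fin B) ℂ,
      frob A = Real.sqrt (∑ b, ∑ b', ‖A b b'‖ ^ 2))
    -- tuning parameter matches path-loss exponent
    (σ : ℝ) (hσρ : σ = ρ)
    (β : ℝ) (hβ : β = 1 + 1 / (2 * σ))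
    -- scaled feature: H̃(d) = (B^{β-1} / ‖H̄(d)‖_F^β) H̄(d)
    (Htil : ℝ → Matrix (Fin B) (Fin B) ℂ)
    (hHtil : ∀ d : ℝ,
      Htil d = ((((B : ℝ) ^ (β - 1) / (frob (Hbar d)) ^ β : ℝ) : ℂ)) • Hbar d)
    (dA dC : ℝ) (hdA : 0 < dA) (hdC : 0 < dC) :
    frob (Htil dA - Htil dC) = |dA - dC| := by
  rw [hσρ] at hβ
  have hBpos : (0:ℝ) < B := by exact_mod_cast Nat.lt_of_lt_of_le Nat.zero_lt_one hB
  set E : Fin B → ℂ := fun b => Complex.exp (-Complex.I *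
    (((2 * Real.pi / lam) * Δr * ((b : ℕ) : ℝ) * Real.cos φ : ℝ) : ℂ)) with hE
  have hEnorm : ∀ b, ‖E b‖ = 1 := by
    intro b
    simp only [hE]
    rw [Complex.norm_exp]
    simp
  have hh' : ∀ d : ℝ, 0 < d → ∀ b : Fin B,
      h d b = ((d ^ (-ρ) : ℝ) : ℂ) * E b := fun d hd b => hh d hd b
  have hHb : ∀ d : ℝ, 0 < d → ∀ b b' : Fin B,
      Hbar d b b' = ((d ^ (-(2*ρ)) : ℝ) : ℂ) * (E b * star (E b')) := by
    intro d hd b b'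
    rw [hHbar, hh' d hd, hh' d hd]
    have key : (d ^ (-ρ) : ℝ) * (d ^ (-ρ) : ℝ) = d ^ (-(2*ρ)) := by
      rw [← Real.rpow_add hd]; ring_nf
    rw [star_mul']
    have hs : star ((d ^ (-ρ) : ℝ) : ℂ) = ((d ^ (-ρ) : ℝ) : ℂ) := by simp
    rw [hs, ← key]
    push_cast
    ring
  have hfd : ∀ d : ℝ, 0 < d → frob (Hbar d) = B * d ^ (-(2*ρ)) := by
    intro d hd
    rw [hfrob]
    have hn : ∀ b b' : Fin B, ‖Hbar d b b'‖ ^ 2 = (d ^ (-(2*ρ))) ^ 2 := by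
      intro b b'
      rw [hHb d hd, norm_mul, norm_mul, hEnorm, norm_star, hEnorm,
        Complex.norm_real, Real.norm_of_nonneg (Real.rpow_nonneg hd.le _)]
      ring
    simp only [hn, Finset.sum_const, Finset.card_univ, Fintype.card_fin, nsmul_eq_mul]
    have : (B:ℝ) * ((B:ℝ) * (d ^ (-(2*ρ))) ^ 2) = ((B:ℝ) * d ^ (-(2*ρ))) ^ 2 := by ring
    rw [this, Real.sqrt_sq (by positivity)]
  have hscal : ∀ d : ℝ, 0 < d →
      (B:ℝ) ^ (β - 1) / (frob (Hbar d)) ^ β * d ^ (-(2*ρ)) = d / B := by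
    intro d hd
    rw [hfd d hd]
    have hBβ : ((B:ℝ) * d ^ (-(2*ρ))) ^ β = (B:ℝ) ^ β * (d ^ (-(2*ρ))) ^ β :=
      Real.mul_rpow hBpos.le (Real.rpow_nonneg hd.le _)
    have h1 : (B:ℝ) ^ (β - 1) = (B:ℝ) ^ β / B := by
      rw [Real.rpow_sub hBpos, Real.rpow_one]
    have h2 : (d ^ (-(2*ρ))) ^ β = d ^ (-(2*ρ)) / d := by
      rw [← Real.rpow_mul hd.le]
      have he : -(2*ρ)*β = -(2*ρ) + (-1) := by
        rw [hβ]; field_simp; ring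
      rw [he, Real.rpow_add hd, Real.rpow_neg_one]
      ring
    rw [hBβ, h1, h2]
    have hBβne : ((B:ℝ)) ^ β ≠ 0 := (Real.rpow_pos_of_pos hBpos β).ne'
    have htne : d ^ (-(2*ρ)) ≠ 0 := (Real.rpow_pos_of_pos hd _).ne'
    field_simp
  have hHt : ∀ d : ℝ, 0 < d → ∀ b b' : Fin B,
      Htil d b b' = ((d / B : ℝ) : ℂ) * (E b * star (E b')) := by
    intro d hd b b'
    rw [hHtil, Matrix.smul_apply, hHb d hd, smul_eq_mul, ← mul_assoc,
      ← Complex.ofReal_mul, hscal d hd]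
  rw [hfrob]
  have hn : ∀ b b' : Fin B,
      ‖(Htil dA - Htil dC) b b'‖ ^ 2 = ((dA - dC) / B) ^ 2 := by
    intro b b'
    rw [Matrix.sub_apply, hHt dA hdA, hHt dC hdC, ← sub_mul]
    have : ((dA / B : ℝ) : ℂ) - ((dC / B : ℝ) : ℂ) = (((dA - dC) / B : ℝ) : ℂ) := by
      push_cast; ring
    rw [this, norm_mul, norm_mul, hEnorm, norm_star, hEnorm, Complex.norm_real]
    rw [mul_one, mul_one, Real.norm_eq_abs, sq_abs]
  simp only [hn, Finset.sum_const, Finset.card_univ, Fintype.card_fin, nsmul_eq_mul]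
  have : (B:ℝ) * ((B:ℝ) * ((dA - dC) / B) ^ 2) = (dA - dC) ^ 2 := by
    field_simp
  rw [this, Real.sqrt_sq_eq_abs]
end

section
/- For every tuning parameter σ > 0, the Frobenius norm of the scaled raw-second-moment feature of the vanilla line-of-sight channel satisfies ‖H̃(d)‖_F = d^{ρ/σ} for all d > 0; in particular, the map d ↦ ‖H̃(d)‖_F is strictly increasing on (0,∞), so the scaling amplifies CSI from transmitters far from the receiver and attenuates CSI from nearby transmitters. -/
/-- For every tuning parameter σ > 0, the Frobenius norm of the scaled
raw-second-moment feature of the vanilla LoS channel satisfies ‖H̃(d)‖_F = d^{ρ/σ}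
for all d > 0; in particular, d ↦ ‖H̃(d)‖_F is strictly increasing on (0,∞). -/
theorem stmt_3
    (B : ℕ) (hB : 1 ≤ B)
    (lam Δr ρ : ℝ) (hlam : 0 < lam) (hΔr : 0 < Δr) (hρ : 0 < ρ)
    (φ : ℝ)
    -- vanilla LoS channel vector: h(d)_b = d^{-ρ} exp(-i (2π/λ) Δr (b-1) cos φ)
    (h : ℝ → Fin B → ℂ)
    (hh : ∀ d : ℝ, 0 < d → ∀ b : Fin B,
      h d b = ((d ^ (-ρ) : ℝ) : ℂ) *
        Complex.exp (-Complex.I *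
          (((2 * Real.pi / lam) * Δr * ((b : ℕ) : ℝ) * Real.cos φ : ℝ) : ℂ)))
    -- raw second moment: H̄(d) = h(d) h(d)^H
    (Hbar : ℝ → Matrix (Fin B) (Fin B) ℂ)
    (hHbar : ∀ d : ℝ, ∀ b b' : Fin B, Hbar d b b' = h d b * star (h d b'))
    -- Frobenius norm
    (frob : Matrix (Fin B) (Fin B) ℂ → ℝ)
    (hfrob : ∀ A : Matrix (Fin B) (Fin B) ℂ,
      frob A = Real.sqrt (∑ b, ∑ b', ‖A b b'‖ ^ 2))
    -- β(σ) = 1 + 1/(2σ)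
    (β : ℝ → ℝ) (hβ : ∀ σ : ℝ, β σ = 1 + 1 / (2 * σ))
    -- scaled feature: H̃_σ(d) = (B^{β(σ)-1} / ‖H̄(d)‖_F^{β(σ)}) H̄(d)
    (Htil : ℝ → ℝ → Matrix (Fin B) (Fin B) ℂ)
    (hHtil : ∀ σ d : ℝ,
      Htil σ d =
        ((((B : ℝ) ^ (β σ - 1) / (frob (Hbar d)) ^ (β σ) : ℝ) : ℂ)) • Hbar d) :
    ∀ σ : ℝ, 0 < σ →
      (∀ d : ℝ, 0 < d → frob (Htil σ d) = d ^ (ρ / σ)) ∧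
      StrictMonoOn (fun d : ℝ => frob (Htil σ d)) (Set.Ioi (0 : ℝ)) := by
  intro σ hσ
  have hBpos : (0:ℝ) < (B:ℝ) := by exact_mod_cast hB
  have key : ∀ d : ℝ, 0 < d → frob (Htil σ d) = d ^ (ρ / σ) := by
    intro d hd
    set a : ℝ := d ^ (-ρ) with ha
    have hapos : 0 < a := Real.rpow_pos_of_pos hd _
    have hnorm : ∀ b : Fin B, ‖h d b‖ = a := by
      intro b
      rw [hh d hd b, norm_mul]
      have h2 : ‖Complex.exp (-Complex.I *
          (((2 * Real.pi / lam) * Δr * ((b : ℕ) : ℝ) * Real.cos φ : ℝ) : ℂ))‖ = 1 := by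
        rw [Complex.norm_exp]
        simp
      rw [h2, mul_one, Complex.norm_real, Real.norm_eq_abs, abs_of_pos hapos]
    have hfb : frob (Hbar d) = (B:ℝ) * a ^ 2 := by
      rw [hfrob]
      have he : ∀ b b' : Fin B, ‖Hbar d b b'‖ ^ 2 = (a ^ 2) ^ 2 := by
        intro b b'
        rw [hHbar, norm_mul, norm_star, hnorm, hnorm]; ring
      have : (∑ b : Fin B, ∑ b' : Fin B, ‖Hbar d b b'‖ ^ 2) = ((B:ℝ) * a ^ 2) ^ 2 := by
        simp only [he, Finset.sum_const, Finset.card_univ, Fintype.card_fin, nsmul_eq_mul]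
        ring
      rw [this, Real.sqrt_sq (by positivity)]
    have hsmul : ∀ (c : ℝ) (A : Matrix (Fin B) (Fin B) ℂ), 0 ≤ c →
        frob (((c : ℝ) : ℂ) • A) = c * frob A := by
      intro c A hc
      rw [hfrob, hfrob]
      have he : ∀ b b' : Fin B, ‖(((c:ℝ):ℂ) • A) b b'‖ ^ 2 = c ^ 2 * ‖A b b'‖ ^ 2 := by
        intro b b'
        rw [Matrix.smul_apply, norm_smul, Complex.norm_real, Real.norm_eq_abs,
          abs_of_nonneg hc, mul_pow]
      simp only [he, ← Finset.mul_sum]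
      rw [Real.sqrt_mul (by positivity), Real.sqrt_sq hc]
    have hcnn : 0 ≤ (B:ℝ) ^ (β σ - 1) / (frob (Hbar d)) ^ (β σ) := by
      rw [hfb]; positivity
    rw [hHtil, hsmul _ _ hcnn, hfb]
    -- now pure real arithmetic
    set X : ℝ := (B:ℝ) * a ^ 2 with hX
    have hXpos : 0 < X := by positivity
    have ha2 : (a ^ 2 : ℝ) = d ^ (-(2*ρ)) := by
      rw [ha, ← Real.rpow_natCast (d ^ (-ρ)) 2, ← Real.rpow_mul hd.le]
      congr 1
      push_cast
      ring
    have key2 : (B:ℝ) ^ (β σ - 1) / X ^ (β σ) * X = (a ^ 2) ^ (1 - β σ) := by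
      have h1 : X ^ (1 - β σ) = X / X ^ β σ := by
        rw [Real.rpow_sub hXpos, Real.rpow_one]
      have h2 : X ^ (1 - β σ) = (B:ℝ) ^ (1 - β σ) * (a ^ 2) ^ (1 - β σ) := by
        rw [hX]; exact Real.mul_rpow hBpos.le (by positivity)
      have he0 : β σ - 1 + (1 - β σ) = 0 := by ring
      have h3 : (B:ℝ) ^ (β σ - 1) * (B:ℝ) ^ (1 - β σ) = 1 := by
        rw [← Real.rpow_add hBpos, he0, Real.rpow_zero]
      calc (B:ℝ) ^ (β σ - 1) / X ^ (β σ) * X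
          = (B:ℝ) ^ (β σ - 1) * (X / X ^ β σ) := by ring
        _ = (B:ℝ) ^ (β σ - 1) * X ^ (1 - β σ) := by rw [h1]
        _ = ((B:ℝ) ^ (β σ - 1) * (B:ℝ) ^ (1 - β σ)) * (a ^ 2) ^ (1 - β σ) := by
              rw [h2]; ring
        _ = (a ^ 2) ^ (1 - β σ) := by rw [h3, one_mul]
    rw [key2, ha2, ← Real.rpow_mul hd.le]
    congr 1
    rw [hβ]
    field_simp
    ring
  refine ⟨key, ?_⟩
  intro x hx y hy hxy
  simp only
  rw [key x hx, key y hy]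
  exact Real.rpow_lt_rpow (le_of_lt hx) hxy (div_pos hρ hσ)
end
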